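/- arXiv:2105.06593 — 3 statements merged into one kernel-verified Lean document; each statement's English description precedes it below -/
import Mathlib

section
/- (Proposition 1, forward direction) Let M be a normal-form game with N ≥ 2 players and M̄ its zero-sum gifting extension. If s = (s_1,…,s_N) is a pure-strategy Nash equilibrium of M, then the extended profile ((s_1,0),…,(s_N,0)) obtained by appending a 0 gift to each player's action is a pure-strategy Nash equilibrium of M̄. -/
/-- (Proposition 1, forward direction) If s is a pure-strategy Nash equilibrium
of the original game M, then the extended profile obtained by appending a 0
gift to each player's action is a pure-strategy Nash equilibrium of the
zero-sum gifting extension M̄. -/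
theorem prop1_forward_zero_gift_profile_is_PNE
    (N : ℕ) (hN : 2 ≤ N)
    (S : Fin N → Type) [∀ i, Fintype (S i)] [∀ i, Nonempty (S i)]
    (μ : Fin N → (∀ i, S i) → ℝ)
    (G : Fin N → Finset ℝ)
    (hG0 : ∀ i, (0 : ℝ) ∈ G i)
    (hGnonneg : ∀ i, ∀ gi ∈ G i, (0 : ℝ) ≤ gi)
    (σ : Fin N → (Fin N → ℝ) → ℝ)
    (hσ : ∀ (i : Fin N) (g : Fin N → ℝ),
      σ i g = -g i + (1 / ((N : ℝ) - 1)) * ∑ j ∈ Finset.univ.erase i, g j)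
    (μbar : Fin N → (∀ i, S i) → (Fin N → ℝ) → ℝ)
    (hμbar : ∀ (i : Fin N) (s : ∀ i, S i) (g : Fin N → ℝ),
      μbar i s g = μ i s + σ i g)
    (s : ∀ i, S i)
    (hPNE : ∀ (i : Fin N) (s' : S i), μ i (Function.update s i s') ≤ μ i s) :
    ∀ (i : Fin N) (s' : S i) (g' : ℝ), g' ∈ G i →
      μbar i (Function.update s i s')
        (Function.update (fun _ : Fin N => (0 : ℝ)) i g')
      ≤ μbar i s (fun _ : Fin N => (0 : ℝ)) := by
  intro i s' g' hg'
  rw [hμbar, hμbar, hσ, hσ]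
  have h1 : ∑ j ∈ Finset.univ.erase i,
      Function.update (fun _ : Fin N => (0 : ℝ)) i g' j = 0 := by
    apply Finset.sum_eq_zero
    intro j hj
    rw [Function.update_of_ne (Finset.ne_of_mem_erase hj)]
  have h2 : ∑ j ∈ Finset.univ.erase i, (0 : ℝ) = 0 := Finset.sum_const_zero
  rw [h1, h2, Function.update_self]
  have := hPNE i s'
  have hg := hGnonneg i g' hg'
  nlinarith
end

section
/- (Proposition 1, backward direction) Let M be a normal-form game with N ≥ 2 players and M̄ its zero-sum gifting extension. If s̄ = ((s_1,g_1),…,(s_N,g_N)) is a pure-strategy Nash equilibrium of M̄, then g_i = 0 for all i ∈ {1,…,N} and the underlying profile s = (s_1,…,s_N) is a pure-strategy Nash equilibrium of M. -/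
/-- (Proposition 1, backward direction) If s̄ = (s, g) is a pure-strategy Nash
equilibrium of the zero-sum gifting extension M̄, then all gifts are 0 and the
underlying profile s is a pure-strategy Nash equilibrium of the original game M. -/
theorem prop1_backward_PNE_of_extension
    (N : ℕ) (hN : 2 ≤ N)
    (S : Fin N → Type) [∀ i, Fintype (S i)] [∀ i, Nonempty (S i)]
    (μ : Fin N → (∀ i, S i) → ℝ)
    (G : Fin N → Finset ℝ)
    (hG0 : ∀ i, (0 : ℝ) ∈ G i)
    (hGnonneg : ∀ i, ∀ gi ∈ G i, (0 : ℝ) ≤ gi)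
    (σ : Fin N → (Fin N → ℝ) → ℝ)
    (hσ : ∀ (i : Fin N) (g : Fin N → ℝ),
      σ i g = -g i + (1 / ((N : ℝ) - 1)) * ∑ j ∈ Finset.univ.erase i, g j)
    (μbar : Fin N → (∀ i, S i) → (Fin N → ℝ) → ℝ)
    (hμbar : ∀ (i : Fin N) (s : ∀ i, S i) (g : Fin N → ℝ),
      μbar i s g = μ i s + σ i g)
    (s : ∀ i, S i) (g : Fin N → ℝ) (hg : ∀ i, g i ∈ G i)
    (hPNE : ∀ (i : Fin N) (s' : S i) (g' : ℝ), g' ∈ G i →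
      μbar i (Function.update s i s') (Function.update g i g') ≤ μbar i s g) :
    (∀ i, g i = 0) ∧
      (∀ (i : Fin N) (s' : S i), μ i (Function.update s i s') ≤ μ i s) := by
  have hsum : ∀ i : Fin N, ∑ j ∈ Finset.univ.erase i, Function.update g i 0 j
      = ∑ j ∈ Finset.univ.erase i, g j := by
    intro i
    apply Finset.sum_congr rfl
    intro j hj
    exact Function.update_of_ne (Finset.ne_of_mem_erase hj) _ _
  have hg0 : ∀ i, g i = 0 := by
    intro i
    have h := hPNE i (s i) 0 (hG0 i)
    rw [Function.update_eq_self, hμbar, hμbar, hσ, hσ, hsum i,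
      Function.update_self] at h
    have : -(0:ℝ) ≤ -g i := by linarith
    have h1 : g i ≤ 0 := by linarith
    exact le_antisymm h1 (hGnonneg i _ (hg i))
  refine ⟨hg0, fun i s' => ?_⟩
  have h := hPNE i s' 0 (hG0 i)
  rw [hμbar, hμbar, hσ, hσ, hsum i, Function.update_self, hg0 i] at h
  linarith
end

section
/- (Proposition 1) Let M be a normal-form game with N ≥ 2 players and M̄ its zero-sum gifting extension. The map s = (s_1,…,s_N) ↦ ((s_1,0),…,(s_N,0)) is a bijection from the set S_PNE of pure-strategy Nash equilibria of M onto the set S̄_PNE of pure-strategy Nash equilibria of M̄; in particular, every PNE of M̄ lies in the image of this map and hence assigns gift 0 to every player. -/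
/-- (Proposition 1) The map s ↦ ((s_1,0),…,(s_N,0)) is a bijection from the set
of pure-strategy Nash equilibria of M onto the set of pure-strategy Nash
equilibria of the zero-sum gifting extension M̄; in particular, every PNE of M̄
assigns gift 0 to every player. -/
theorem prop1_bijection_of_PNE_sets
    (N : ℕ) (hN : 2 ≤ N)
    (S : Fin N → Type) [∀ i, Fintype (S i)] [∀ i, Nonempty (S i)]
    (μ : Fin N → (∀ i, S i) → ℝ)
    (G : Fin N → Finset ℝ)
    (hG0 : ∀ i, (0 : ℝ) ∈ G i)
    (hGnonneg : ∀ i, ∀ gi ∈ G i, (0 : ℝ) ≤ gi)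
    (σ : Fin N → (Fin N → ℝ) → ℝ)
    (hσ : ∀ (i : Fin N) (g : Fin N → ℝ),
      σ i g = -g i + (1 / ((N : ℝ) - 1)) * ∑ j ∈ Finset.univ.erase i, g j)
    (μbar : Fin N → (∀ i, S i) → (Fin N → ℝ) → ℝ)
    (hμbar : ∀ (i : Fin N) (s : ∀ i, S i) (g : Fin N → ℝ),
      μbar i s g = μ i s + σ i g) :
    Set.BijOn (fun s : (∀ i, S i) => (s, fun _ : Fin N => (0 : ℝ)))
      {s : ∀ i, S i |
        ∀ (i : Fin N) (s' : S i), μ i (Function.update s i s') ≤ μ i s}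
      {p : (∀ i, S i) × (Fin N → ℝ) |
        (∀ i, p.2 i ∈ G i) ∧
        ∀ (i : Fin N) (s' : S i) (g' : ℝ), g' ∈ G i →
          μbar i (Function.update p.1 i s') (Function.update p.2 i g')
            ≤ μbar i p.1 p.2}
    ∧
    ∀ (s : ∀ i, S i) (g : Fin N → ℝ), (∀ i, g i ∈ G i) →
      (∀ (i : Fin N) (s' : S i) (g' : ℝ), g' ∈ G i →
        μbar i (Function.update s i s') (Function.update g i g') ≤ μbar i s g) →
      ∀ i, g i = 0 := by

  have hσupd : ∀ (i : Fin N) (g : Fin N → ℝ) (x : ℝ),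
      σ i (Function.update g i x)
        = -x + (1 / ((N : ℝ) - 1)) * ∑ j ∈ Finset.univ.erase i, g j := by
    intro i g x
    rw [hσ, Function.update_self]
    congr 2
    refine Finset.sum_congr rfl fun j hj => ?_
    exact Function.update_of_ne (Finset.ne_of_mem_erase hj) _ _
  have key : ∀ (s : ∀ i, S i) (g : Fin N → ℝ), (∀ i, g i ∈ G i) →
      (∀ (i : Fin N) (s' : S i) (g' : ℝ), g' ∈ G i →
        μbar i (Function.update s i s') (Function.update g i g') ≤ μbar i s g) →
      ∀ i, g i = 0 := by
    intro s g hg hpne i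
    have h := hpne i (s i) 0 (hG0 i)
    rw [Function.update_eq_self, hμbar, hμbar, hσupd, hσ] at h
    have := hGnonneg i (g i) (hg i)
    linarith
  refine ⟨⟨?_, ?_, ?_⟩, key⟩
  · intro s hs
    refine ⟨fun i => hG0 i, fun i s' g' hg' => ?_⟩
    rw [hμbar, hμbar, hσupd, hσ]
    have h1 := hs i s'
    have h2 := hGnonneg i g' hg'
    simp only [neg_zero, Finset.sum_const_zero]
    linarith
  · intro a _ b _ h
    simpa using congrArg Prod.fst h
  · intro p hp
    have hg0 : ∀ i, p.2 i = 0 := key p.1 p.2 hp.1 hp.2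
    have hg : p.2 = fun _ => (0 : ℝ) := funext hg0
    refine ⟨p.1, ?_, ?_⟩
    · intro i s'
      have h := hp.2 i s' 0 (hG0 i)
      rw [hg] at h
      have hupd : Function.update (fun _ : Fin N => (0 : ℝ)) i 0
          = fun _ => (0 : ℝ) := by
        simpa using Function.update_eq_self i (fun _ : Fin N => (0 : ℝ))
      rw [hupd, hμbar, hμbar] at h
      linarith
    · exact Prod.ext rfl hg.symm
end
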